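/- Let α > 0, Φ > 0, γ > 1, t₀ ∈ ℝ, and P₀ > 0, and set T_c = t₀ + P₀^γ / (γ · α · Φ^γ). Suppose P : ℝ → ℝ is continuous on [t₀, T_c], differentiable on [t₀, T_c), satisfies P(t₀) = P₀, P(t) > 0 and P'(t) = -α · Φ^γ · P(t)^(1-γ) for all t ∈ [t₀, T_c). Then P is strictly decreasing on [t₀, T_c] and P(T_c) = 0. -/

import Mathlib

/-!
Along the flow `P' = c · P^(1-γ)` the quantity `P^γ` has constant derivative `γ · c`, so with
`c = -α Φ^γ` it decreases linearly, `P(t)^γ = P₀^γ - γ α Φ^γ (t - t₀)`, and reaches `0` exactly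
at `T_c`. Since `P ≥ 0` on `[t₀, T_c]` by continuity and `x ↦ x^γ` is strictly increasing on
`[0, ∞)`, `P` itself is strictly decreasing and `P(T_c) = 0`.
-/

open Set

lemma HasDerivAt.rpow_const_of_eq_mul_rpow_one_sub {f : ℝ → ℝ} {c γ x : ℝ}
    (hf : HasDerivAt f (c * f x ^ (1 - γ)) x) (hx : 0 < f x) :
    HasDerivAt (fun t => f t ^ γ) (γ * c) x := by
  have hcancel : f x ^ (1 - γ) * f x ^ (γ - 1) = 1 := by
    rw [← Real.rpow_add hx, sub_add_sub_cancel', sub_self, Real.rpow_zero]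
  convert hf.rpow_const (p := γ) (Or.inl hx.ne') using 1
  linear_combination (-(c * γ)) * hcancel

lemma rpow_eq_of_hasDerivAt_mul_rpow_one_sub {f : ℝ → ℝ} {a b c γ : ℝ} (hγ : 0 ≤ γ)
    (hcont : ContinuousOn f (Icc a b)) (hpos : ∀ t ∈ Ico a b, 0 < f t)
    (hderiv : ∀ t ∈ Ico a b, HasDerivAt f (c * f t ^ (1 - γ)) t) :
    ∀ t ∈ Icc a b, f t ^ γ = f a ^ γ + γ * c * (t - a) := by
  refine eq_of_has_deriv_right_eq (f' := fun _ => γ * c) (fun t ht => ?_) (fun t _ => ?_)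
    (hcont.rpow_const fun _ _ => Or.inr hγ) (by fun_prop) (by simp)
  · exact ((hderiv t ht).rpow_const_of_eq_mul_rpow_one_sub (hpos t ht)).hasDerivWithinAt
  · simpa using (((hasDerivAt_id t).sub_const a).const_mul (γ * c)).const_add (f a ^ γ)
      |>.hasDerivWithinAt

lemma nonneg_on_Icc_of_pos_on_Ico {f : ℝ → ℝ} {a b : ℝ} (hab : a < b)
    (hcont : ContinuousOn f (Icc a b)) (hpos : ∀ t ∈ Ico a b, 0 < f t) :
    ∀ t ∈ Icc a b, 0 ≤ f t := by
  rw [← closure_Ico hab.ne] at hcont ⊢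
  exact le_on_closure (fun t ht => (hpos t ht).le) continuousOn_const hcont

lemma StrictAntiOn.of_rpow {f : ℝ → ℝ} {s : Set ℝ} {γ : ℝ} (hγ : 0 < γ)
    (hf : ∀ t ∈ s, 0 ≤ f t) (h : StrictAntiOn (fun t => f t ^ γ) s) : StrictAntiOn f s :=
  fun _ hx _ hy hxy => (Real.rpow_lt_rpow_iff (hf _ hy) (hf _ hx) hγ).1 (h hx hy hxy)

/-- If P is continuous on [t₀, T_c], differentiable on [t₀, T_c)
with P' = -α·Φ^γ·P^(1-γ) and P > 0 there, and P(t₀) = P₀ > 0, where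
T_c = t₀ + P₀^γ/(γ·α·Φ^γ), then P is strictly decreasing on [t₀, T_c] and
P(T_c) = 0.  Powers are rpow. -/
theorem subcritical_solution_hits_zero (α Φ γ t₀ P₀ : ℝ) (P : ℝ → ℝ)
    (hα : 0 < α) (hΦ : 0 < Φ) (hγ : 1 < γ) (hP₀ : 0 < P₀) :
    let Tc : ℝ := t₀ + P₀ ^ γ / (γ * α * Φ ^ γ)
    ContinuousOn P (Set.Icc t₀ Tc) →
    P t₀ = P₀ →
    (∀ t ∈ Set.Ico t₀ Tc, 0 < P t) →
    (∀ t ∈ Set.Ico t₀ Tc, HasDerivAt P (-α * Φ ^ γ * P t ^ (1 - γ)) t) →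
    StrictAntiOn P (Set.Icc t₀ Tc) ∧ P Tc = 0 := by
  intro Tc hcont hP0 hpos hderiv
  have hγ0 : 0 < γ := by linarith
  have hC : 0 < γ * α * Φ ^ γ := by positivity
  have hTc : t₀ < Tc := lt_add_of_pos_right t₀ (by positivity)
  have hlaw : ∀ t ∈ Icc t₀ Tc, P t ^ γ = P₀ ^ γ - γ * α * Φ ^ γ * (t - t₀) := by
    intro t ht
    rw [rpow_eq_of_hasDerivAt_mul_rpow_one_sub hγ0.le hcont hpos hderiv t ht, hP0]
    ring
  have hnonneg := nonneg_on_Icc_of_pos_on_Ico hTc hcont hpos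
  refine ⟨StrictAntiOn.of_rpow hγ0 hnonneg fun x hx y hy hxy => ?_, ?_⟩
  · simp only [hlaw x hx, hlaw y hy]
    gcongr
  · have hzero : P Tc ^ γ = 0 := by
      rw [hlaw Tc (right_mem_Icc.2 hTc.le), add_sub_cancel_left, mul_div_cancel₀ _ hC.ne',
        sub_self]
    exact (Real.rpow_eq_zero (hnonneg Tc (right_mem_Icc.2 hTc.le)) hγ0.ne').1 hzero
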